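/- Let τ, Δ, γ be rational numbers satisfying the two equations 10τ³ + 15Δτ + γ = 0 and 5τ⁴ + 15Δτ² + 2γτ + 3Δ² = 0. Then τ = 0, Δ = 0 and γ = 0. -/

import Mathlib

/-!
Eliminating `γ` between the two equations leaves the binary quadratic form
`Δ² - 5Δτ² - 5τ⁴`, whose discriminant `45 = 3² · 5` is not a rational square, so it
has no rational zero other than the trivial one.
-/

lemma Rat.sq_ne_five (q : ℚ) : q ^ 2 ≠ 5 := by
  intro h
  have : ¬IsSquare (5 : ℚ) := by norm_num
  exact this ⟨q, by rw [← h, sq]⟩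

lemma Rat.eq_zero_of_sq_sub_five_mul_sub_five_mul_sq_eq_zero {x y : ℚ}
    (h : x ^ 2 - 5 * x * y - 5 * y ^ 2 = 0) : x = 0 ∧ y = 0 := by
  by_cases hy : y = 0
  · subst hy
    exact ⟨pow_eq_zero_iff two_ne_zero |>.mp (by linarith), rfl⟩
  · -- completing the square: `(2x - 5y)² = 45 y²`
    refine absurd ?_ (Rat.sq_ne_five ((2 * x - 5 * y) / (3 * y)))
    field_simp
    linear_combination 4 * h

/-- Arithmetic lemma from the proof of Theorem 2.6, case Y ≅ ℙ⁴:
if rationals τ, Δ, γ satisfy 10τ³ + 15Δτ + γ = 0 and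
5τ⁴ + 15Δτ² + 2γτ + 3Δ² = 0, then τ = Δ = γ = 0. -/
theorem stmt_0 (τ Δ γ : ℚ)
    (h1 : 10 * τ ^ 3 + 15 * Δ * τ + γ = 0)
    (h2 : 5 * τ ^ 4 + 15 * Δ * τ ^ 2 + 2 * γ * τ + 3 * Δ ^ 2 = 0) :
    τ = 0 ∧ Δ = 0 ∧ γ = 0 := by
  have hform : Δ ^ 2 - 5 * Δ * τ ^ 2 - 5 * (τ ^ 2) ^ 2 = 0 := by
    linear_combination (1 / 3) * h2 - (2 / 3) * τ * h1
  obtain ⟨hΔ, hτ2⟩ := Rat.eq_zero_of_sq_sub_five_mul_sub_five_mul_sq_eq_zero hform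
  have hτ : τ = 0 := pow_eq_zero_iff two_ne_zero |>.mp hτ2
  subst hτ hΔ
  exact ⟨rfl, rfl, by linarith⟩
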